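/- The rotation number of a regular closed plane curve is invariant under regular homotopy. -/

import Mathlib

open Complex Real

open Complex Real

/-- A regular closed curve in the plane (identified with `ℂ`): a `C¹` map, periodic of
period 1 (i.e. defined on `S¹`), with nowhere vanishing derivative. -/
def IsRegularClosedCurve (γ : ℝ → ℂ) : Prop :=
  ContDiff ℝ 1 γ ∧ Function.Periodic γ 1 ∧ ∀ t, deriv γ t ≠ 0

/-- `γ` has rotation number `n`: the winding number of `γ'` about the origin is `n`,
expressed via a continuous angle function `θ` for the derivative. -/
def HasRotationNumber (γ : ℝ → ℂ) (n : ℤ) : Prop :=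
  ∃ θ : ℝ → ℝ, Continuous θ ∧
    (∀ t, deriv γ t = (‖deriv γ t‖ : ℂ) * Complex.exp (θ t * Complex.I)) ∧
    θ 1 - θ 0 = 2 * π * n

/-- A regular homotopy between two regular closed curves: a `C¹` family of regular
closed curves interpolating between them. -/
def IsRegularHomotopy (γ₀ γ₁ : ℝ → ℂ) : Prop :=
  ∃ H : ℝ → ℝ → ℂ,
    ContDiff ℝ 1 (fun p : ℝ × ℝ => H p.1 p.2) ∧
    (∀ s ∈ Set.Icc (0 : ℝ) 1, IsRegularClosedCurve (H s)) ∧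
    H 0 = γ₀ ∧ H 1 = γ₁


lemma aux_prod_ratio (a : ℕ → ℂ) : ∀ N : ℕ, (∀ j ≤ N, a j ≠ 0) →
    (∏ j ∈ Finset.range N, a (j + 1) / a j) = a N / a 0 := by
  intro N
  induction N with
  | zero => intro h; simp [div_self (h 0 le_rfl)]
  | succ n ih =>
    intro h
    rw [Finset.prod_range_succ, ih (fun j hj => h j (hj.trans (Nat.le_succ n)))]
    have h0 := h 0 (Nat.zero_le _)
    have hn := h n (Nat.le_succ n)
    field_simp

lemma aux_sum_arg_int (a : ℕ → ℂ) (N : ℕ) (h0 : ∀ j ≤ N, a j ≠ 0) (hper : a N = a 0) :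
    ∃ k : ℤ, ∑ j ∈ Finset.range N, Complex.arg (a (j + 1) / a j) = 2 * π * k := by
  set S : ℝ := ∑ j ∈ Finset.range N, Complex.arg (a (j + 1) / a j) with hS
  have hprod : (∏ j ∈ Finset.range N, a (j + 1) / a j) = 1 := by
    rw [aux_prod_ratio a N h0, hper, div_self (h0 0 (Nat.zero_le N))]
  have hexp : Complex.exp ((S : ℂ) * Complex.I) = 1 := by
    have hsum : ((S : ℂ)) * Complex.I
        = ∑ j ∈ Finset.range N, (Complex.arg (a (j + 1) / a j) : ℂ) * Complex.I := by
      rw [hS]; push_cast; rw [Finset.sum_mul]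
    rw [hsum, Complex.exp_sum]
    have hterm : ∀ j ∈ Finset.range N,
        Complex.exp ((Complex.arg (a (j + 1) / a j) : ℂ) * Complex.I)
          = (a (j + 1) / a j) / ((‖a (j + 1) / a j‖ : ℝ) : ℂ) := by
      intro j hj
      have hjN := Finset.mem_range.mp hj
      have hne : a (j + 1) / a j ≠ 0 := div_ne_zero (h0 _ hjN) (h0 _ (le_of_lt hjN))
      have habs : ((‖a (j + 1) / a j‖ : ℝ) : ℂ) ≠ 0 := by
        simpa using hne
      rw [eq_div_iff habs, mul_comm]
      exact Complex.norm_mul_exp_arg_mul_I _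
    rw [Finset.prod_congr rfl hterm, Finset.prod_div_distrib]
    have hd : (∏ j ∈ Finset.range N, ((‖a (j + 1) / a j‖ : ℝ) : ℂ))
        = ((∏ j ∈ Finset.range N, ‖a (j + 1) / a j‖ : ℝ) : ℂ) := by
      push_cast; ring
    rw [hd, ← norm_prod, hprod]
    simp
  obtain ⟨n, hn⟩ := Complex.exp_eq_one_iff.mp hexp
  refine ⟨n, ?_⟩
  have h2 : (S : ℂ) * Complex.I = ((n : ℂ) * (2 * π)) * Complex.I := by rw [hn]; ring
  have hSc : (S : ℂ) = (n : ℂ) * (2 * π) := mul_right_cancel₀ Complex.I_ne_zero h2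
  have : (S : ℂ) = ((2 * π * n : ℝ) : ℂ) := by rw [hSc]; push_cast; ring
  exact Complex.ofReal_inj.mp this

lemma aux_sum_arg_lift (f : ℝ → ℂ) (θ : ℝ → ℝ) (N : ℕ) (hN : 0 < N)
    (hrep : ∀ t, f t = (‖f t‖ : ℂ) * Complex.exp (θ t * Complex.I))
    (hne : ∀ t, f t ≠ 0)
    (hsmall : ∀ j : ℕ, j < N → |θ (((j : ℝ) + 1) / N) - θ ((j : ℝ) / N)| < π) :
    ∑ j ∈ Finset.range N, Complex.arg (f (((j : ℝ) + 1) / N) / f ((j : ℝ) / N))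
      = θ 1 - θ 0 := by
  have key : ∀ t t' : ℝ, |θ t' - θ t| < π → Complex.arg (f t' / f t) = θ t' - θ t := by
    intro t t' h
    have hnp : ∀ u, (0 : ℝ) < ‖f u‖ := fun u => norm_pos_iff.mpr (hne u)
    have hratio : f t' / f t = ((‖f t'‖ / ‖f t‖ : ℝ) : ℂ) *
        Complex.exp (((θ t' - θ t : ℝ) : ℂ) * Complex.I) := by
      conv_lhs => rw [hrep t', hrep t]
      rw [mul_div_mul_comm, ← Complex.exp_sub, ← sub_mul]
      push_cast
      ring_nf
    rw [hratio, Complex.arg_real_mul _ (div_pos (hnp t') (hnp t)), Complex.exp_mul_I]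
    have habs := abs_lt.mp h
    exact Complex.arg_cos_add_sin_mul_I ⟨habs.1, le_of_lt habs.2⟩
  have hcongr : ∑ j ∈ Finset.range N, Complex.arg (f (((j : ℝ) + 1) / N) / f ((j : ℝ) / N))
      = ∑ j ∈ Finset.range N, ((fun j : ℕ => θ ((j : ℝ) / N)) (j + 1)
          - (fun j : ℕ => θ ((j : ℝ) / N)) j) := by
    refine Finset.sum_congr rfl fun j hj => ?_
    have hjN := Finset.mem_range.mp hj
    have hc : ((j + 1 : ℕ) : ℝ) / N = ((j : ℝ) + 1) / N := by push_cast; ring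
    simp only [hc]
    exact key _ _ (hsmall j hjN)
  rw [hcongr, Finset.sum_range_sub (fun j : ℕ => θ ((j : ℝ) / N))]
  have hN' : (N : ℝ) ≠ 0 := Nat.cast_ne_zero.mpr hN.ne'
  rw [Nat.cast_zero, zero_div, div_self hN']

/-- The rotation number of a regular closed plane curve is invariant under regular
homotopy. -/
theorem stmt4 (γ₀ γ₁ : ℝ → ℂ) (h₀ : IsRegularClosedCurve γ₀) (h₁ : IsRegularClosedCurve γ₁)
    (n₀ n₁ : ℤ) (hr₀ : HasRotationNumber γ₀ n₀) (hr₁ : HasRotationNumber γ₁ n₁)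
    (h : IsRegularHomotopy γ₀ γ₁) : n₀ = n₁ := by
  obtain ⟨H, hH, hreg, hH0, hH1⟩ := h
  obtain ⟨θ₀, hθ₀c, hθ₀rep, hθ₀n⟩ := hr₀
  obtain ⟨θ₁, hθ₁c, hθ₁rep, hθ₁n⟩ := hr₁
  set f : ℝ × ℝ → ℂ := fun p => H p.1 p.2 with hf
  set D : ℝ × ℝ → ℂ := fun p => fderiv ℝ f p ((0 : ℝ), (1 : ℝ)) with hD
  have hfd : Differentiable ℝ f := hH.differentiable one_ne_zero
  -- D is the partial derivative in t
  have hderiv : ∀ s t : ℝ, HasDerivAt (H s) (D (s, t)) t := by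
    intro s t
    have h1 : HasFDerivAt f (fderiv ℝ f (s, t)) (s, t) := (hfd (s, t)).hasFDerivAt
    have h2 : HasDerivAt (fun u : ℝ => ((s, u) : ℝ × ℝ)) (((0 : ℝ), (1 : ℝ))) t :=
      (hasDerivAt_const t s).prodMk (hasDerivAt_id t)
    exact h1.comp_hasDerivAt t h2
  have hDeq : ∀ s t : ℝ, deriv (H s) t = D (s, t) := fun s t => (hderiv s t).deriv
  have hDcont : Continuous D :=
    (hH.continuous_fderiv one_ne_zero).clm_apply continuous_const
  have hDne : ∀ s ∈ Set.Icc (0 : ℝ) 1, ∀ t : ℝ, D (s, t) ≠ 0 := by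
    intro s hs t
    rw [← hDeq s t]
    exact (hreg s hs).2.2 t
  -- periodicity of the derivative
  have hper : ∀ s ∈ Set.Icc (0 : ℝ) 1, D (s, 1) = D (s, 0) := by
    intro s hs
    have hp : Function.Periodic (H s) 1 := (hreg s hs).2.1
    have : deriv (H s) (0 + 1) = deriv (H s) 0 := by
      have he : (fun x : ℝ => H s (x + 1)) = H s := funext fun x => hp x
      rw [← deriv_comp_add_const (f := H s) (a := 1) (x := 0), he]
    rw [← hDeq, ← hDeq, ← this, zero_add]
  -- compactness: lower bound on ‖D‖
  set K : Set (ℝ × ℝ) := Set.Icc (0 : ℝ) 1 ×ˢ Set.Icc (0 : ℝ) 1 with hK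
  have hKc : IsCompact K := isCompact_Icc.prod isCompact_Icc
  have hKne : K.Nonempty := ⟨(0, 0), by constructor <;> exact ⟨le_refl 0, zero_le_one⟩⟩
  obtain ⟨p₀, hp₀K, hp₀min⟩ := hKc.exists_isMinOn hKne (hDcont.norm.continuousOn)
  set m : ℝ := ‖D p₀‖ with hm
  have hmpos : 0 < m := by
    have hne : D p₀ ≠ 0 := by
      have := hDne p₀.1 hp₀K.1 p₀.2
      simpa using this
    exact norm_pos_iff.mpr hne
  have hmle : ∀ p ∈ K, m ≤ ‖D p‖ := fun p hp => hp₀min hp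
  -- uniform continuity of D on K
  obtain ⟨δ, hδpos, hδ⟩ := (Metric.uniformContinuousOn_iff.mp
    (hKc.uniformContinuousOn_of_continuous hDcont.continuousOn)) m hmpos
  -- uniform continuity of θ₀, θ₁ on [0,1]
  obtain ⟨δ₀, hδ₀pos, hδ₀⟩ := (Metric.uniformContinuousOn_iff.mp
    (isCompact_Icc.uniformContinuousOn_of_continuous hθ₀c.continuousOn)) π Real.pi_pos
  obtain ⟨δ₁, hδ₁pos, hδ₁⟩ := (Metric.uniformContinuousOn_iff.mp
    (isCompact_Icc.uniformContinuousOn_of_continuous hθ₁c.continuousOn)) π Real.pi_pos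
  -- choose N
  obtain ⟨M, hM⟩ := exists_nat_one_div_lt (show (0:ℝ) < min δ (min δ₀ δ₁) from
    lt_min hδpos (lt_min hδ₀pos hδ₁pos))
  set N : ℕ := M + 1 with hNdef
  have hNpos : 0 < N := Nat.succ_pos M
  have hNc : (0:ℝ) < N := Nat.cast_pos.mpr hNpos
  have hNlt : (1:ℝ) / N < min δ (min δ₀ δ₁) := by
    have : ((N:ℝ)) = (M:ℝ) + 1 := by push_cast [hNdef]; ring
    rw [this]; exact hM
  have hNδ : (1:ℝ) / N < δ := hNlt.trans_le (min_le_left _ _)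
  have hNδ₀ : (1:ℝ) / N < δ₀ := hNlt.trans_le ((min_le_right _ _).trans (min_le_left _ _))
  have hNδ₁ : (1:ℝ) / N < δ₁ := hNlt.trans_le ((min_le_right _ _).trans (min_le_right _ _))
  -- grid points
  have hgrid : ∀ j : ℕ, j ≤ N → (j : ℝ) / N ∈ Set.Icc (0:ℝ) 1 := by
    intro j hj
    constructor
    · positivity
    · rw [div_le_one hNc]; exact_mod_cast hj
  have hgrid' : ∀ j : ℕ, j < N → ((j : ℝ) + 1) / N ∈ Set.Icc (0:ℝ) 1 := by
    intro j hj
    have : ((j : ℝ) + 1) = ((j + 1 : ℕ) : ℝ) := by push_cast; ring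
    rw [this]; exact hgrid (j+1) hj
  have hdist : ∀ j : ℕ, dist (((j:ℝ)+1)/N) ((j:ℝ)/N) = 1 / N := by
    intro j
    rw [Real.dist_eq]
    have : ((j:ℝ)+1)/N - (j:ℝ)/N = 1/N := by field_simp; ring
    rw [this, abs_of_pos (by positivity)]
  -- positivity of real part of ratios
  have hre : ∀ s ∈ Set.Icc (0:ℝ) 1, ∀ j : ℕ, j < N →
      0 < (D (s, ((j:ℝ)+1)/N) / D (s, (j:ℝ)/N)).re := by
    intro s hs j hj
    set z := D (s, (j:ℝ)/N) with hz
    set w := D (s, ((j:ℝ)+1)/N) with hw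
    have hzne : z ≠ 0 := hDne s hs _
    have hzK : ((s, (j:ℝ)/N) : ℝ × ℝ) ∈ K := ⟨hs, hgrid j (le_of_lt hj)⟩
    have hwK : ((s, ((j:ℝ)+1)/N) : ℝ × ℝ) ∈ K := ⟨hs, hgrid' j hj⟩
    have hdd : dist ((s, ((j:ℝ)+1)/N) : ℝ × ℝ) ((s, (j:ℝ)/N) : ℝ × ℝ) < δ := by
      rw [Prod.dist_eq]
      simp only [dist_self]
      rw [hdist j]
      calc max 0 (1/(N:ℝ)) = 1/N := max_eq_right (by positivity)
        _ < δ := hNδ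
    have hwz : ‖w - z‖ < ‖z‖ := by
      have h1 : dist w z < m := hδ _ hwK _ hzK hdd
      have h2 : m ≤ ‖z‖ := hmle _ hzK
      rw [dist_eq_norm] at h1
      linarith
    have hdiv : ‖w / z - 1‖ < 1 := by
      have : w / z - 1 = (w - z) / z := by field_simp
      rw [this, norm_div]
      rw [div_lt_one (norm_pos_iff.mpr hzne)]
      exact hwz
    have habs : |(w / z - 1).re| ≤ ‖w / z - 1‖ := Complex.abs_re_le_norm _
    have : (w / z).re = 1 + (w / z - 1).re := by simp
    rw [this]
    have := abs_le.mp habs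
    linarith [this.1]
  -- the winding sum
  set W : ℝ → ℝ := fun s => ∑ j ∈ Finset.range N,
    Complex.arg (D (s, ((j:ℝ)+1)/N) / D (s, (j:ℝ)/N)) with hW
  -- continuity of W on [0,1]
  have hWcont : ContinuousOn W (Set.Icc (0:ℝ) 1) := by
    apply continuousOn_finset_sum
    intro j hj
    have hjN := Finset.mem_range.mp hj
    have hc1 : Continuous fun s : ℝ => D (s, ((j:ℝ)+1)/N) :=
      hDcont.comp (continuous_id.prodMk continuous_const)
    have hc2 : Continuous fun s : ℝ => D (s, (j:ℝ)/N) :=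
      hDcont.comp (continuous_id.prodMk continuous_const)
    have hrat : ContinuousOn (fun s : ℝ => D (s, ((j:ℝ)+1)/N) / D (s, (j:ℝ)/N))
        (Set.Icc (0:ℝ) 1) :=
      hc1.continuousOn.div hc2.continuousOn (fun s hs => hDne s hs _)
    intro s hs
    show ContinuousWithinAt
      (Complex.arg ∘ fun s : ℝ => D (s, ((j:ℝ)+1)/N) / D (s, (j:ℝ)/N)) (Set.Icc (0:ℝ) 1) s
    exact ContinuousAt.comp_continuousWithinAt
      (Complex.continuousAt_arg (Or.inl (hre s hs j hjN))) (hrat s hs)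
  -- W is valued in 2πℤ
  have hWint : ∀ s ∈ Set.Icc (0:ℝ) 1, ∃ k : ℤ, W s = 2 * π * k := by
    intro s hs
    have h0 : ∀ j : ℕ, j ≤ N → D (s, (j:ℝ)/N) ≠ 0 := fun j _ => hDne s hs _
    obtain ⟨k, hk⟩ := aux_sum_arg_int (fun j : ℕ => D (s, (j:ℝ)/N)) N h0 (by
      rw [div_self hNc.ne', Nat.cast_zero, zero_div]
      exact hper s hs)
    refine ⟨k, ?_⟩
    rw [hW, ← hk]
    refine Finset.sum_congr rfl fun j hj => ?_
    have : ((j + 1 : ℕ) : ℝ) = (j:ℝ) + 1 := by push_cast; ring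
    rw [this]
  -- endpoint values
  have hW0 : W 0 = 2 * π * n₀ := by
    have hD0 : ∀ t : ℝ, D (0, t) = deriv γ₀ t := by
      intro t; rw [← hDeq, hH0]
    have hrep : ∀ t : ℝ, D (0, t) = (‖D (0, t)‖ : ℂ) * Complex.exp (θ₀ t * Complex.I) := by
      intro t; rw [hD0 t]; exact hθ₀rep t
    have hne : ∀ t : ℝ, D (0, t) ≠ 0 := by
      intro t; rw [hD0 t]; exact h₀.2.2 t
    have hsmall : ∀ j : ℕ, j < N → |θ₀ (((j:ℝ)+1)/N) - θ₀ ((j:ℝ)/N)| < π := by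
      intro j hj
      have := hδ₀ _ (hgrid' j hj) _ (hgrid j (le_of_lt hj)) (by rw [hdist j]; exact hNδ₀)
      rwa [Real.dist_eq] at this
    have := aux_sum_arg_lift (fun t => D (0, t)) θ₀ N hNpos hrep hne hsmall
    rw [hW]
    simp only at this ⊢
    rw [this, hθ₀n]
  have hW1 : W 1 = 2 * π * n₁ := by
    have hD1 : ∀ t : ℝ, D (1, t) = deriv γ₁ t := by
      intro t; rw [← hDeq, hH1]
    have hrep : ∀ t : ℝ, D (1, t) = (‖D (1, t)‖ : ℂ) * Complex.exp (θ₁ t * Complex.I) := by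
      intro t; rw [hD1 t]; exact hθ₁rep t
    have hne : ∀ t : ℝ, D (1, t) ≠ 0 := by
      intro t; rw [hD1 t]; exact h₁.2.2 t
    have hsmall : ∀ j : ℕ, j < N → |θ₁ (((j:ℝ)+1)/N) - θ₁ ((j:ℝ)/N)| < π := by
      intro j hj
      have := hδ₁ _ (hgrid' j hj) _ (hgrid j (le_of_lt hj)) (by rw [hdist j]; exact hNδ₁)
      rwa [Real.dist_eq] at this
    have := aux_sum_arg_lift (fun t => D (1, t)) θ₁ N hNpos hrep hne hsmall
    rw [hW]
    simp only at this ⊢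
    rw [this, hθ₁n]
  -- conclude via IVT
  by_contra hne'
  have hπ := Real.pi_pos
  rcases lt_or_gt_of_ne hne' with hlt | hgt
  · have hc1 : (n₀ : ℝ) + 1 ≤ (n₁ : ℝ) := by exact_mod_cast hlt
    have hmem : 2 * π * n₀ + π ∈ Set.Icc (W 0) (W 1) := by
      rw [hW0, hW1]
      constructor
      · linarith
      · nlinarith
    obtain ⟨s, hs, hWs⟩ := intermediate_value_Icc zero_le_one hWcont hmem
    obtain ⟨k, hk⟩ := hWint s hs
    rw [hk] at hWs
    have h2 : ((2 * k : ℤ) : ℝ) = ((2 * n₀ + 1 : ℤ) : ℝ) := by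
      push_cast
      have hπne := Real.pi_ne_zero
      have h3 : (2 * (k:ℝ) - 2 * (n₀:ℝ) - 1) * π = 0 := by linarith
      rcases mul_eq_zero.mp h3 with h4 | h4
      · linarith
      · exact absurd h4 hπne
    have := Int.cast_injective h2
    omega
  · have hc1 : (n₁ : ℝ) + 1 ≤ (n₀ : ℝ) := by exact_mod_cast hgt
    have hmem : 2 * π * n₁ + π ∈ Set.Icc (W 1) (W 0) := by
      rw [hW0, hW1]
      constructor
      · linarith
      · nlinarith
    obtain ⟨s, hs, hWs⟩ := intermediate_value_Icc' zero_le_one hWcont hmem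
    obtain ⟨k, hk⟩ := hWint s hs
    rw [hk] at hWs
    have h2 : ((2 * k : ℤ) : ℝ) = ((2 * n₁ + 1 : ℤ) : ℝ) := by
      push_cast
      have hπne := Real.pi_ne_zero
      have h3 : (2 * (k:ℝ) - 2 * (n₁:ℝ) - 1) * π = 0 := by linarith
      rcases mul_eq_zero.mp h3 with h4 | h4
      · linarith
      · exact absurd h4 hπne
    have := Int.cast_injective h2
    omega
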